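/- In the partial suppression setup, if x and y are distinct items of I belonging to two different parts I_i ≠ I_j of the partition, and x and y lie in the same ghost record (both in L₁, or both in L₂), then s({x, y}, R') = s({x, y}, R) − 1. -/

import Mathlib

/-!
Every record of `R'` other than the ghosts and the records `I \ I_k` is a record of `R`, and
the `c` removed copies of `I` all contained `{x, y}`. Among the `c` records `I \ I_k`, exactly
those with `k ∉ {i, j}` still contain `{x, y}`, which gives `c - 2`; of the two disjoint ghost
records exactly one contains `{x, y}`. Hence the support drops by `c - (c - 2) - 1 = 1`.
-/

variable {α : Type*} [DecidableEq α]

/-- Support of an itemset `I` in a record chunk `R`: the number of records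
of `R`, counted with multiplicity, that are supersets of `I`. -/
def supp (I : Finset α) (R : Multiset (Finset α)) : ℕ :=
  (R.filter fun r => I ⊆ r).card

theorem supp_add (J : Finset α) (A B : Multiset (Finset α)) :
    supp J (A + B) = supp J A + supp J B := by
  simp only [supp, Multiset.filter_add, Multiset.card_add]

theorem supp_mono (J : Finset α) {A B : Multiset (Finset α)} (h : A ≤ B) :
    supp J A ≤ supp J B :=
  Multiset.card_le_card (Multiset.filter_le_filter _ h)

theorem supp_sub_of_le (J : Finset α) {A B : Multiset (Finset α)} (h : A ≤ B) :
    supp J (B - A) = supp J B - supp J A := by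
  rw [supp, Multiset.filter_sub, Multiset.card_sub (Multiset.filter_le_filter _ h)]
  rfl

theorem supp_nsmul_singleton_of_subset {J r : Finset α} (h : J ⊆ r) (n : ℕ) :
    supp J (n • {r}) = n := by
  rw [supp, Multiset.nsmul_singleton, Multiset.filter_eq_self.mpr
    (fun s hs => Multiset.eq_of_mem_replicate hs ▸ h), Multiset.card_replicate]

theorem supp_map_sdiff {ι : Type*} [Fintype ι] {J I : Finset α} (hJ : J ⊆ I)
    (P : ι → Finset α) :
    supp J (Finset.univ.val.map fun k => I \ P k) =
      (Finset.univ.filter fun k => Disjoint J (P k)).card := by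
  rw [supp, Multiset.filter_map, Multiset.card_map, Finset.card_def, Finset.filter_val]
  congr 1
  exact Multiset.filter_congr fun k _ => by simp [Finset.subset_sdiff, hJ]

theorem filter_disjoint_pair_eq_univ_sdiff {ι : Type*} [Fintype ι] [DecidableEq ι]
    {P : ι → Finset α} (hP : Pairwise fun k l => Disjoint (P k) (P l))
    {x y : α} {i j : ι} (hx : x ∈ P i) (hy : y ∈ P j) :
    (Finset.univ.filter fun k => Disjoint {x, y} (P k)) = Finset.univ \ {i, j} := by
  ext k
  have hxk : x ∈ P k ↔ k = i :=
    ⟨fun hk => by_contra fun hki => Finset.disjoint_left.mp (hP hki) hk hx, (· ▸ hx)⟩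
  have hyk : y ∈ P k ↔ k = j :=
    ⟨fun hk => by_contra fun hkj => Finset.disjoint_left.mp (hP hkj) hk hy, (· ▸ hy)⟩
  simp [Finset.disjoint_insert_left, hxk, hyk]

theorem supp_pair_of_subset_left {J L₁ L₂ : Finset α} (hJ : J.Nonempty) (h₁ : J ⊆ L₁)
    (hL : Disjoint L₁ L₂) :
    supp J {L₁, L₂} = 1 := by
  have h₂ : ¬ J ⊆ L₂ := fun h₂ => hJ.ne_empty (Finset.disjoint_self_iff_empty J |>.mp
    (hL.mono h₁ h₂))
  simp [supp, h₁, h₂]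

theorem supp_pair_of_subset_right {J L₁ L₂ : Finset α} (hJ : J.Nonempty) (h₂ : J ⊆ L₂)
    (hL : Disjoint L₁ L₂) :
    supp J {L₁, L₂} = 1 := by
  rw [Multiset.pair_comm]
  exact supp_pair_of_subset_left hJ h₂ hL.symm

theorem partial_suppression_pair_diff_parts_same_ghost_general
    (I : Finset α)
    (c : ℕ)
    (P : Fin c → Finset α)
    (hPdisj : ∀ i j : Fin c, i ≠ j → Disjoint (P i) (P j))
    (L₁ L₂ : Finset α)
    (hLdisj : L₁ ∩ L₂ = ∅)
    (R : Multiset (Finset α))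
    (hR : c • ({I} : Multiset (Finset α)) ≤ R)
    (R' : Multiset (Finset α))
    (hR' : R' = (R - c • ({I} : Multiset (Finset α)))
      + (Finset.univ.val.map fun i : Fin c => I \ P i)
      + {L₁, L₂})
    (x y : α) (hxI : x ∈ I) (hyI : y ∈ I)
    (i j : Fin c) (hij : i ≠ j) (hx : x ∈ P i) (hy : y ∈ P j)
    (hghost : (x ∈ L₁ ∧ y ∈ L₁) ∨ (x ∈ L₂ ∧ y ∈ L₂)) :
    supp {x, y} R' = supp {x, y} R - 1 := by
  have hxyI : ({x, y} : Finset α) ⊆ I :=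
    Finset.insert_subset hxI (Finset.singleton_subset_iff.2 hyI)
  have hL : Disjoint L₁ L₂ := Finset.disjoint_iff_inter_eq_empty.2 hLdisj
  have hcopies : supp {x, y} (c • {I}) = c := supp_nsmul_singleton_of_subset hxyI c
  have hle : c ≤ supp {x, y} R := hcopies ▸ supp_mono _ hR
  have hparts : supp {x, y} (Finset.univ.val.map fun k : Fin c => I \ P k) = c - 2 := by
    rw [supp_map_sdiff hxyI, filter_disjoint_pair_eq_univ_sdiff hPdisj hx hy,
      Finset.card_univ_sdiff, Finset.card_pair hij, Fintype.card_fin]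
  have hghosts : supp {x, y} {L₁, L₂} = 1 := by
    rcases hghost with ⟨hx₁, hy₁⟩ | ⟨hx₂, hy₂⟩
    · exact supp_pair_of_subset_left (Finset.insert_nonempty _ _)
        (Finset.insert_subset hx₁ (Finset.singleton_subset_iff.2 hy₁)) hL
    · exact supp_pair_of_subset_right (Finset.insert_nonempty _ _)
        (Finset.insert_subset hx₂ (Finset.singleton_subset_iff.2 hy₂)) hL
  have htwo : 2 ≤ c := by
    simpa [Finset.card_pair hij] using Finset.card_le_univ ({i, j} : Finset (Fin c))
  rw [hR', supp_add, supp_add, supp_sub_of_le _ hR, hcopies, hparts, hghosts]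
  omega

theorem partial_suppression_pair_diff_parts_same_ghost
    (I : Finset α) (hI : 2 ≤ I.card)
    (c : ℕ) (hc : c = (I.card + 1) / 2)
    (P : Fin c → Finset α)
    (hPdisj : ∀ i j : Fin c, i ≠ j → Disjoint (P i) (P j))
    (hPne : ∀ i : Fin c, (P i).Nonempty)
    (hPcard : ∀ i : Fin c, (P i).card ≤ 2)
    (hPunion : Finset.univ.biUnion P = I)
    (L₁ L₂ : Finset α)
    (hLunion : L₁ ∪ L₂ = I) (hLdisj : L₁ ∩ L₂ = ∅)
    (hsplit : ∀ i : Fin c, (P i).card = 2 →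
      (P i ∩ L₁).card = 1 ∧ (P i ∩ L₂).card = 1)
    (R : Multiset (Finset α))
    (hR : c • ({I} : Multiset (Finset α)) ≤ R)
    (R' : Multiset (Finset α))
    (hR' : R' = (R - c • ({I} : Multiset (Finset α)))
      + (Finset.univ.val.map fun i : Fin c => I \ P i)
      + {L₁, L₂})
    (x y : α) (hxI : x ∈ I) (hyI : y ∈ I) (hxy : x ≠ y)
    (i j : Fin c) (hij : i ≠ j) (hx : x ∈ P i) (hy : y ∈ P j)
    (hghost : (x ∈ L₁ ∧ y ∈ L₁) ∨ (x ∈ L₂ ∧ y ∈ L₂)) :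
    supp {x, y} R' = supp {x, y} R - 1 :=
  partial_suppression_pair_diff_parts_same_ghost_general I c P hPdisj L₁ L₂ hLdisj R hR R' hR' x y
    hxI hyI i j hij hx hy hghost
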